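/- If a positive semidefinite operator E on ℂ³ satisfies ⟨ψ_i| (E ⊗ I₃ ⊗ I₃) |ψ_j⟩ = 0 for all i ≠ j, where {|ψ_j⟩} are the 27 states of the basis 𝔹_II(3,3) and E acts on the first tensor factor, then E is proportional to the identity on ℂ³. -/

import Mathlib

/-!
For product states the matrix element factorizes:
`⟨a b c| E ⊗ I ⊗ I |a' b' c'⟩ = ⟨a|E|a'⟩ ⟨b|b'⟩ ⟨c|c'⟩`. So every pair of basis states whose
second and third factors are pairwise non-orthogonal forces `⟨a|E|a'⟩ = 0`. Eight such pairs
give `⟨0|E|ξ±⟩ = ⟨ξ±|E|0⟩ = ⟨η₊|E|η₋⟩ = ⟨ξ±|E|ξ∓⟩ = ⟨2|E|η₊⟩ = 0`, a linear system in the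
entries of `E` whose solutions are exactly the multiples of the identity.
-/

noncomputable section
open Kronecker ComplexOrder

abbrev V3 : Type := EuclideanSpace ℂ (Fin 3)
abbrev V333 : Type := EuclideanSpace ℂ (Fin 3 × Fin 3 × Fin 3)

def e3 (i : Fin 3) : V3 := EuclideanSpace.single i 1
def s2 : ℂ := Real.sqrt 2
def etaP : V3 := s2⁻¹ • (e3 0 + e3 1)
def etaM : V3 := s2⁻¹ • (e3 0 - e3 1)
def xiP : V3 := s2⁻¹ • (e3 1 + e3 2)
def xiM : V3 := s2⁻¹ • (e3 1 - e3 2)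

def tp3 (a b c : V3) : V333 :=
  WithLp.toLp 2 (fun p : Fin 3 × Fin 3 × Fin 3 => a p.1 * b p.2.1 * c p.2.2)

/-- The basis `𝔹_II(3,3)` of the paper. -/
def BII33 : Fin 27 → V333 :=
  ![tp3 (e3 0) etaP xiP, tp3 (e3 0) etaP xiM, tp3 (e3 0) etaM xiP, tp3 (e3 0) etaM xiM,
    tp3 etaP (e3 2) xiP, tp3 etaP (e3 2) xiM, tp3 etaM (e3 2) xiP, tp3 etaM (e3 2) xiM,
    tp3 (e3 2) xiP etaP, tp3 (e3 2) xiP etaM, tp3 (e3 2) xiM etaP, tp3 (e3 2) xiM etaM,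
    tp3 etaP xiP (e3 0), tp3 etaP xiM (e3 0), tp3 etaM xiP (e3 0), tp3 etaM xiM (e3 0),
    tp3 xiP (e3 0) etaP, tp3 xiP (e3 0) etaM, tp3 xiM (e3 0) etaP, tp3 xiM (e3 0) etaM,
    tp3 xiP etaP (e3 2), tp3 xiP etaM (e3 2), tp3 xiM etaP (e3 2), tp3 xiM etaM (e3 2),
    tp3 (e3 0) (e3 0) (e3 0), tp3 (e3 1) (e3 1) (e3 1), tp3 (e3 2) (e3 2) (e3 2)]

open scoped ComplexInnerProductSpace

theorem inner_e3_e3 (i j : Fin 3) : ⟪e3 i, e3 j⟫ = if i = j then 1 else 0 := by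
  simp [e3, EuclideanSpace.inner_single_left]

theorem inner_e3_toEuclideanLin_e3 (E : Matrix (Fin 3) (Fin 3) ℂ) (i j : Fin 3) :
    ⟪e3 i, Matrix.toEuclideanLin E (e3 j)⟫ = E i j := by
  simp [e3, EuclideanSpace.inner_single_left, Matrix.toLpLin_apply]

theorem s2_ne_zero : s2 ≠ 0 := by
  simp [s2]

theorem inner_tp3 (a b c a' b' c' : V3) :
    ⟪tp3 a b c, tp3 a' b' c'⟫ = ⟪a, a'⟫ * ⟪b, b'⟫ * ⟪c, c'⟫ := by
  simp only [tp3, PiLp.inner_apply, RCLike.inner_apply, Fintype.sum_prod_type, map_mul,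
    Fin.sum_univ_three]
  ring

theorem toEuclideanLin_kronecker_one_tp3 (E : Matrix (Fin 3) (Fin 3) ℂ) (a b c : V3) :
    Matrix.toEuclideanLin (E ⊗ₖ (1 : Matrix (Fin 3 × Fin 3) (Fin 3 × Fin 3) ℂ)) (tp3 a b c) =
      tp3 (Matrix.toEuclideanLin E a) b c := by
  ext ⟨i, j, k⟩
  simp [tp3, Matrix.toLpLin_apply, Matrix.mulVec, dotProduct, Matrix.one_apply,
    Fintype.sum_prod_type, Finset.sum_mul, mul_assoc]

theorem inner_toEuclideanLin_eq_zero_of_inner_tp3 {E : Matrix (Fin 3) (Fin 3) ℂ}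
    {a b c a' b' c' : V3}
    (h : ⟪tp3 a b c, Matrix.toEuclideanLin
      (E ⊗ₖ (1 : Matrix (Fin 3 × Fin 3) (Fin 3 × Fin 3) ℂ)) (tp3 a' b' c')⟫ = 0)
    (hb : ⟪b, b'⟫ ≠ 0) (hc : ⟪c, c'⟫ ≠ 0) : ⟪a, Matrix.toEuclideanLin E a'⟫ = 0 := by
  rw [toEuclideanLin_kronecker_one_tp3, inner_tp3] at h
  simpa [hb, hc] using h

theorem exists_eq_smul_one_of_inner_toEuclideanLin_eq_zero (E : Matrix (Fin 3) (Fin 3) ℂ)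
    (h0ξp : ⟪e3 0, Matrix.toEuclideanLin E xiP⟫ = 0)
    (h0ξm : ⟪e3 0, Matrix.toEuclideanLin E xiM⟫ = 0)
    (hξp0 : ⟪xiP, Matrix.toEuclideanLin E (e3 0)⟫ = 0)
    (hξm0 : ⟪xiM, Matrix.toEuclideanLin E (e3 0)⟫ = 0)
    (hηpm : ⟪etaP, Matrix.toEuclideanLin E etaM⟫ = 0)
    (hξpm : ⟪xiP, Matrix.toEuclideanLin E xiM⟫ = 0)
    (hξmp : ⟪xiM, Matrix.toEuclideanLin E xiP⟫ = 0)
    (h2ηp : ⟪e3 2, Matrix.toEuclideanLin E etaP⟫ = 0) :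
    ∃ c : ℂ, E = c • (1 : Matrix (Fin 3) (Fin 3) ℂ) := by
  simp only [etaP, etaM, xiP, xiM, map_smul, map_add, map_sub, inner_smul_left, inner_smul_right,
    inner_add_left, inner_add_right, inner_sub_left, inner_sub_right, inner_e3_toEuclideanLin_e3,
    ← mul_add, ← mul_sub, mul_eq_zero, map_eq_zero, inv_eq_zero, s2_ne_zero, false_or]
    at h0ξp h0ξm hξp0 hξm0 hηpm hξpm hξmp h2ηp
  have h01 : E 0 1 = 0 := by linear_combination (h0ξp + h0ξm) / 2
  have h02 : E 0 2 = 0 := by linear_combination (h0ξp - h0ξm) / 2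
  have h10 : E 1 0 = 0 := by linear_combination (hξp0 + hξm0) / 2
  have h20 : E 2 0 = 0 := by linear_combination (hξp0 - hξm0) / 2
  have h21 : E 2 1 = 0 := by linear_combination h2ηp - h20
  have h12 : E 1 2 = 0 := by linear_combination (hξmp - hξpm) / 2 + h21
  have h11 : E 1 1 = E 0 0 := by linear_combination -hηpm - h01 + h10
  have h22 : E 2 2 = E 0 0 := by linear_combination -(hξpm + hξmp) / 2 + h11
  refine ⟨E 0 0, ?_⟩
  ext i j
  fin_cases i <;> fin_cases j <;> simp [h01, h02, h10, h12, h20, h21, h11, h22]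

theorem BII33_OPM_trivial_general (E : Matrix (Fin 3) (Fin 3) ℂ)
    (h : ∀ i j : Fin 27, i ≠ j →
      (inner ℂ (BII33 i)
        (Matrix.toEuclideanLin
          (E ⊗ₖ (1 : Matrix (Fin 3 × Fin 3) (Fin 3 × Fin 3) ℂ)) (BII33 j)) : ℂ) = 0) :
    ∃ c : ℂ, E = c • (1 : Matrix (Fin 3) (Fin 3) ℂ) := by
  have orth (i j : Fin 27) (hij : i ≠ j) {a b c a' b' c' : V3} (hi : BII33 i = tp3 a b c)
      (hj : BII33 j = tp3 a' b' c') : ⟪b, b'⟫ ≠ 0 → ⟪c, c'⟫ ≠ 0 →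
      ⟪a, Matrix.toEuclideanLin E a'⟫ = 0 :=
    inner_toEuclideanLin_eq_zero_of_inner_tp3 (hi ▸ hj ▸ h i j hij)
  refine exists_eq_smul_one_of_inner_toEuclideanLin_eq_zero E
    (orth 24 16 (by decide) rfl rfl ?_ ?_) (orth 24 18 (by decide) rfl rfl ?_ ?_)
    (orth 16 24 (by decide) rfl rfl ?_ ?_) (orth 18 24 (by decide) rfl rfl ?_ ?_)
    (orth 4 6 (by decide) rfl rfl ?_ ?_) (orth 16 18 (by decide) rfl rfl ?_ ?_)
    (orth 18 16 (by decide) rfl rfl ?_ ?_) (orth 26 4 (by decide) rfl rfl ?_ ?_)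
  all_goals
    simp only [etaP, xiP, inner_add_left, inner_add_right, inner_smul_left, inner_smul_right,
      inner_e3_e3]
    simp [s2_ne_zero]

/-- a positive semidefinite operator `E` on `ℂ³` acting on the first factor
that preserves orthogonality of all pairs of states of `𝔹_II(3,3)` is proportional to the
identity. -/
theorem BII33_OPM_trivial (E : Matrix (Fin 3) (Fin 3) ℂ) (hE : E.PosSemidef)
    (h : ∀ i j : Fin 27, i ≠ j →
      (inner ℂ (BII33 i)
        (Matrix.toEuclideanLin
          (E ⊗ₖ (1 : Matrix (Fin 3 × Fin 3) (Fin 3 × Fin 3) ℂ)) (BII33 j)) : ℂ) = 0) :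
    ∃ c : ℂ, E = c • (1 : Matrix (Fin 3) (Fin 3) ℂ) :=
  BII33_OPM_trivial_general E h
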